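/- arXiv:2410.00777 — 6 statements merged into one kernel-verified Lean document; each statement's English description precedes it below -/
import Mathlib

section
/- For every p ≥ 2 there exists a constant m_p ∈ (0,1] such that for all real s, t: |t|^p + (p-1)|s|^p - p|s|^(p-2)·s·t ≥ m_p·|s - t|^p. -/
open Real

private lemma add_rpow_le_rpow_add' {a b : ℝ} (ha : 0 ≤ a) (hb : 0 ≤ b) {q : ℝ}
    (hq : 1 ≤ q) : a ^ q + b ^ q ≤ (a + b) ^ q := by
  have h := NNReal.add_rpow_le_rpow_add a.toNNReal b.toNNReal hq
  have h2 := NNReal.coe_le_coe.2 h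
  push_cast at h2
  rwa [Real.coe_toNNReal a ha, Real.coe_toNNReal b hb] at h2

/-- subgradient inequality via Young's inequality -/
private lemma young_key {p : ℝ} (hp : 2 ≤ p) (x y : ℝ) :
    p * |x| ^ (p - 2) * x * y ≤ |y| ^ p + (p - 1) * |x| ^ p := by
  have hp1 : (1:ℝ) < p := by linarith
  have hyp : (0:ℝ) ≤ |y| ^ p := Real.rpow_nonneg (abs_nonneg y) p
  have hxp : (0:ℝ) ≤ |x| ^ p := Real.rpow_nonneg (abs_nonneg x) p
  rcases eq_or_ne x 0 with rfl | hx
  · simp only [mul_zero, zero_mul]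
    nlinarith
  · have hxpos : 0 < |x| := abs_pos.2 hx
    have hq : p.HolderConjugate (p / (p - 1)) := Real.HolderConjugate.conjExponent hp1
    have hY := Real.young_inequality_of_nonneg (abs_nonneg y)
      (Real.rpow_nonneg (abs_nonneg x) (p - 1)) hq
    have he : (|x| ^ (p - 1)) ^ (p / (p - 1)) = |x| ^ p := by
      rw [← Real.rpow_mul (abs_nonneg x)]
      have hne : p - 1 ≠ 0 := by linarith
      field_simp
    rw [he] at hY
    -- p * |x|^(p-2) * x * y ≤ p * |x|^(p-1) * |y|
    have h1 : |x| ^ (p - 2) * |x| = |x| ^ (p - 1) := by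
      nth_rewrite 2 [show |x| = |x| ^ (1:ℝ) by rw [Real.rpow_one]]
      rw [← Real.rpow_add hxpos]
      ring_nf
    have h2 : x * y ≤ |x| * |y| := by
      calc x * y ≤ |x * y| := le_abs_self _
        _ = |x| * |y| := abs_mul x y
    have h3 : p * |x| ^ (p - 2) * x * y ≤ p * (|x| ^ (p - 1) * |y|) := by
      have hnn : (0:ℝ) ≤ |x| ^ (p - 2) := Real.rpow_nonneg (abs_nonneg x) _
      have := mul_le_mul_of_nonneg_left h2 hnn
      calc p * |x| ^ (p - 2) * x * y = p * (|x| ^ (p - 2) * (x * y)) := by ring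
        _ ≤ p * (|x| ^ (p - 2) * (|x| * |y|)) := by nlinarith
        _ = p * (|x| ^ (p - 1) * |y|) := by rw [← h1]; ring
    have hp0 : (0:ℝ) < p := by linarith
    have h4 : |x| ^ (p - 1) * |y| ≤ |y| ^ p / p + |x| ^ p / (p / (p - 1)) := by
      linarith [hY]
    have h5 : |x| ^ p / (p / (p - 1)) = (p - 1) / p * |x| ^ p := by
      field_simp
    rw [h5] at h4
    calc p * |x| ^ (p - 2) * x * y ≤ p * (|x| ^ (p - 1) * |y|) := h3
      _ ≤ p * (|y| ^ p / p + (p - 1) / p * |x| ^ p) :=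
          mul_le_mul_of_nonneg_left h4 hp0.le
      _ = |y| ^ p + (p - 1) * |x| ^ p := by field_simp

/-- Clarkson-type two point inequality -/
private lemma clarkson {p : ℝ} (hp : 2 ≤ p) (a b : ℝ) :
    2 * |(a + b) / 2| ^ p + (2:ℝ) ^ (1 - p) * |a - b| ^ p ≤ |a| ^ p + |b| ^ p := by
  have hq : (1:ℝ) ≤ p / 2 := by linarith
  set u := |(a + b) / 2| with hu
  set v := |(a - b) / 2| with hv
  have hu0 : 0 ≤ u := abs_nonneg _
  have hv0 : 0 ≤ v := abs_nonneg _
  have key : ∀ w : ℝ, |w| ^ p = (w ^ 2) ^ (p / 2) := by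
    intro w
    rw [← sq_abs, ← Real.rpow_natCast_mul (abs_nonneg w) 2 (p / 2)]
    norm_num
    ring_nf
  have h1 : u ^ p + v ^ p ≤ (u ^ 2 + v ^ 2) ^ (p / 2) := by
    have := add_rpow_le_rpow_add' (sq_nonneg u) (sq_nonneg v) hq
    calc u ^ p + v ^ p = (u ^ 2) ^ (p / 2) + (v ^ 2) ^ (p / 2) := by
          rw [← abs_of_nonneg hu0, key u, ← abs_of_nonneg hv0, key v]; simp [abs_abs]
      _ ≤ (u ^ 2 + v ^ 2) ^ (p / 2) := this
  have h2 : u ^ 2 + v ^ 2 = (a ^ 2 + b ^ 2) / 2 := by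
    rw [hu, hv, sq_abs, sq_abs]; ring
  have h3 : ((a ^ 2 + b ^ 2) / 2) ^ (p / 2) ≤ (|a| ^ p + |b| ^ p) / 2 := by
    have hc := (convexOn_rpow hq).2 (Set.mem_Ici.2 (sq_nonneg a))
      (Set.mem_Ici.2 (sq_nonneg b)) (by norm_num : (0:ℝ) ≤ (1/2:ℝ))
      (by norm_num : (0:ℝ) ≤ (1/2:ℝ)) (by norm_num)
    simp only [smul_eq_mul] at hc
    rw [key a, key b]
    calc ((a ^ 2 + b ^ 2) / 2) ^ (p / 2)
        = (1/2 * a ^ 2 + 1/2 * b ^ 2) ^ (p / 2) := by ring_nf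
      _ ≤ 1/2 * (a ^ 2) ^ (p / 2) + 1/2 * (b ^ 2) ^ (p / 2) := hc
      _ = ((a ^ 2) ^ (p / 2) + (b ^ 2) ^ (p / 2)) / 2 := by ring
  have h4 : v ^ p = |a - b| ^ p / 2 ^ p := by
    rw [hv, abs_div, abs_two, Real.div_rpow (abs_nonneg _) (by norm_num)]
  have h5 : (2:ℝ) ^ (1 - p) * |a - b| ^ p = 2 * v ^ p := by
    rw [h4]
    have h2p : (0:ℝ) < (2:ℝ) ^ p := Real.rpow_pos_of_pos two_pos p
    rw [show (1:ℝ) - p = 1 + (-p) by ring, Real.rpow_add two_pos, Real.rpow_one,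
      Real.rpow_neg (by norm_num : (0:ℝ) ≤ 2)]
    field_simp
  have hmain : u ^ p + v ^ p ≤ (|a| ^ p + |b| ^ p) / 2 := by
    calc u ^ p + v ^ p ≤ (u ^ 2 + v ^ 2) ^ (p / 2) := h1
      _ = ((a ^ 2 + b ^ 2) / 2) ^ (p / 2) := by rw [h2]
      _ ≤ (|a| ^ p + |b| ^ p) / 2 := h3
  rw [h5]
  linarith

theorem R_p_ge_const_mul_abs_sub_pow (p : ℝ) (hp : 2 ≤ p) :
    ∃ m : ℝ, m ∈ Set.Ioc (0:ℝ) 1 ∧ ∀ s t : ℝ,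
      m * |s - t| ^ p ≤ |t| ^ p + (p - 1) * |s| ^ p - p * |s| ^ (p - 2) * s * t := by
  refine ⟨(2:ℝ) ^ (1 - p), ⟨Real.rpow_pos_of_pos two_pos _,
    Real.rpow_le_one_of_one_le_of_nonpos one_le_two (by linarith)⟩, fun s t => ?_⟩
  have hm1 : (2:ℝ) ^ (1 - p) ≤ 1 :=
    Real.rpow_le_one_of_one_le_of_nonpos one_le_two (by linarith)
  rcases eq_or_ne s 0 with rfl | hs
  · simp only [abs_zero, zero_sub, abs_neg, mul_zero, zero_mul]
    rw [Real.zero_rpow (by positivity : p ≠ 0)]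
    have htp : (0:ℝ) ≤ |t| ^ p := Real.rpow_nonneg (abs_nonneg t) p
    nlinarith
  · have hC := clarkson hp s t
    have hY := young_key hp s ((s + t) / 2)
    have hspos : 0 < |s| := abs_pos.2 hs
    have hss : |s| ^ (p - 2) * s * s = |s| ^ p := by
      have : s * s = |s| ^ (2:ℝ) := by
        rw [Real.rpow_two, sq_abs]; ring
      rw [mul_assoc, this, ← Real.rpow_add hspos]
      norm_num
    nlinarith [hC, hY, hss]
end

section
/- Let p > 2 and κ > 0. There exists a constant c_1 = c_1(p,κ) > 0 such that for all real numbers a and b: |a+b|^p ≤ |a|^p + p|a|^(p-2)·a·b + (p(p-1)/2 + κ)·|a|^(p-2)·b^2 + c_1·|b|^p. -/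
/-! By homogeneity (divide by `|a| ^ p` and put `t = b / a`) it suffices to bound `|1 + t| ^ p`
by `1 + p t + K t² + c |t| ^ p` with `K = p (p - 1) / 2 + κ`. On `(-1, ε]` the second derivative
`p (p - 1) (1 + t) ^ (p - 2)` of `(1 + t) ^ p` stays below `2 K` for small `ε > 0`, so
`1 + p t + K t² - (1 + t) ^ p` is convex there and lies above its tangent at `0`, which is zero.
For `|t| ≥ ε`, `|1 + t| ^ p ≤ (1 + 1 / ε) ^ p |t| ^ p`, while `1 + p t + K t² ≥ 0` since
`K ≥ p² / 4`. -/

open Real Set Topology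

theorem ConvexOn.add_mul_sub_le_of_hasDerivAt {S : Set ℝ} {f : ℝ → ℝ} {f' x y : ℝ}
    (hf : ConvexOn ℝ S f) (hx : x ∈ S) (hy : y ∈ S) (hd : HasDerivAt f f' x) :
    f x + f' * (y - x) ≤ f y := by
  rcases lt_trichotomy x y with hxy | rfl | hyx
  · have h := hf.le_slope_of_hasDerivAt hx hy hxy hd
    rw [slope_def_field, le_div_iff₀ (sub_pos.2 hxy)] at h
    linarith
  · simp
  · have h := hf.slope_le_of_hasDerivAt hy hx hyx hd
    rw [slope_def_field, div_le_iff₀ (sub_pos.2 hyx)] at h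
    linarith

theorem one_add_rpow_le_quadratic {p K ε t : ℝ} (hp : 2 ≤ p) (hε : 0 ≤ ε)
    (hK : p * (p - 1) * (1 + ε) ^ (p - 2) ≤ 2 * K) (ht : t ∈ Ioc (-1) ε) :
    (1 + t) ^ p ≤ 1 + p * t + K * t ^ 2 := by
  set φ : ℝ → ℝ := fun t => 1 + p * t + K * t ^ 2 - (1 + t) ^ p
  set φ' : ℝ → ℝ := fun t => p + 2 * K * t - p * (1 + t) ^ (p - 1)
  have hφ : ∀ t, HasDerivAt φ (φ' t) t := by
    intro t
    have h := ((((hasDerivAt_id t).const_mul p).const_add 1).add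
      ((hasDerivAt_pow 2 t).const_mul K)).sub
      (((hasDerivAt_id t).const_add 1).rpow_const (p := p) (Or.inr (by linarith)))
    refine h.congr_deriv ?_
    simp only [φ', id]
    ring
  have hφ' : ∀ t, HasDerivAt φ' (2 * K - p * (p - 1) * (1 + t) ^ (p - 2)) t := by
    intro t
    have h := (((hasDerivAt_id t).const_mul (2 * K)).const_add p).sub
      ((((hasDerivAt_id t).const_add 1).rpow_const (p := p - 1) (Or.inr (by linarith))).const_mul p)
    refine h.congr_deriv ?_
    rw [show p - 1 - 1 = p - 2 by ring]
    simp only [id]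
    ring
  have hconv : ConvexOn ℝ (Ioc (-1) ε) φ := by
    refine convexOn_of_hasDerivWithinAt2_nonneg (convex_Ioc _ _)
      (fun t _ => (hφ t).continuousAt.continuousWithinAt)
      (fun t _ => (hφ t).hasDerivWithinAt) (fun t _ => (hφ' t).hasDerivWithinAt) ?_
    rw [interior_Ioc]
    rintro s ⟨hs₁, hs₂⟩
    have : p * (p - 1) * (1 + s) ^ (p - 2) ≤ p * (p - 1) * (1 + ε) ^ (p - 2) := by
      gcongr
      · nlinarith
      · linarith
    linarith
  simpa [φ, φ'] using hconv.add_mul_sub_le_of_hasDerivAt ⟨by norm_num, hε⟩ ht (hφ 0)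

theorem exists_mul_one_add_rpow_lt {p κ : ℝ} (hκ : 0 < κ) :
    ∃ ε ∈ Ioo (0 : ℝ) 1, p * (p - 1) * (1 + ε) ^ (p - 2) < p * (p - 1) + 2 * κ := by
  have hc : ContinuousAt (fun e : ℝ => p * (p - 1) * (1 + e) ^ (p - 2)) 0 := by
    fun_prop (disch := norm_num)
  have hlt : ∀ᶠ e in 𝓝 (0 : ℝ), p * (p - 1) * (1 + e) ^ (p - 2) < p * (p - 1) + 2 * κ :=
    hc.eventually (gt_mem_nhds (by beta_reduce; rw [add_zero, one_rpow, mul_one]; linarith))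
  obtain ⟨ε, ⟨hε, hε₁⟩, hε₀⟩ := (((hlt.and (gt_mem_nhds one_pos)).filter_mono
    nhdsWithin_le_nhds).and (self_mem_nhdsWithin : ∀ᶠ e in 𝓝[>] (0 : ℝ), 0 < e)).exists
  exact ⟨ε, ⟨hε₀, hε₁⟩, hε⟩

theorem one_add_mul_add_mul_sq_nonneg {p κ : ℝ} (hp : 2 ≤ p) (hκ : 0 ≤ κ) (t : ℝ) :
    0 ≤ 1 + p * t + (p * (p - 1) / 2 + κ) * t ^ 2 := by
  nlinarith [sq_nonneg (p * t + 2), mul_nonneg (mul_nonneg (by linarith : 0 ≤ p)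
    (sub_nonneg.2 hp)) (sq_nonneg t), mul_nonneg hκ (sq_nonneg t)]

theorem abs_one_add_rpow_le_of_le_abs {p ε t : ℝ} (hp : 0 ≤ p) (hε : 0 < ε)
    (ht : ε ≤ |t|) :
    |1 + t| ^ p ≤ (1 + 1 / ε) ^ p * |t| ^ p := by
  rw [← mul_rpow (by positivity) (abs_nonneg t)]
  gcongr
  calc |1 + t| ≤ 1 + |t| := (abs_add_le _ _).trans (by simp)
    _ ≤ (1 + 1 / ε) * |t| := by
      rw [add_mul, one_mul, add_comm, one_div_mul_eq_div]
      gcongr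
      rwa [le_div_iff₀ hε, one_mul]

theorem exists_abs_one_add_rpow_le {p κ : ℝ} (hp : 2 < p) (hκ : 0 < κ) :
    ∃ c ≥ (1 : ℝ), ∀ t : ℝ,
      |1 + t| ^ p ≤ 1 + p * t + (p * (p - 1) / 2 + κ) * t ^ 2 + c * |t| ^ p := by
  obtain ⟨ε, ⟨hε₀, hε₁⟩, hK⟩ := exists_mul_one_add_rpow_lt (p := p) hκ
  refine ⟨(1 + 1 / ε) ^ p, one_le_rpow (by simp [hε₀.le]) (by linarith), fun t => ?_⟩
  have hquad := one_add_mul_add_mul_sq_nonneg hp.le hκ.le t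
  rcases le_or_gt |t| ε with ht | ht
  · obtain ⟨ht₁, ht₂⟩ := abs_le.1 ht
    rw [abs_of_pos (by linarith : 0 < 1 + t)]
    have hnear := one_add_rpow_le_quadratic (K := p * (p - 1) / 2 + κ) hp.le hε₀.le
      (by linarith) ⟨by linarith, ht₂⟩
    have : 0 ≤ (1 + 1 / ε) ^ p * |t| ^ p := by positivity
    linarith
  · linarith [abs_one_add_rpow_le_of_le_abs (p := p) (by linarith) hε₀ ht.le]

theorem abs_rpow_sub_two_mul_sq {a : ℝ} (ha : a ≠ 0) (p : ℝ) :
    |a| ^ (p - 2) * a ^ 2 = |a| ^ p := by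
  rw [← sq_abs, ← rpow_natCast, ← rpow_add (abs_pos.2 ha)]
  norm_num

theorem taylor_upper_bound_abs_rpow (p κ : ℝ) (hp : 2 < p) (hκ : 0 < κ) :
    ∃ c₁ > (0:ℝ), ∀ a b : ℝ,
      |a + b| ^ p ≤ |a| ^ p + p * |a| ^ (p - 2) * a * b
        + (p * (p - 1) / 2 + κ) * |a| ^ (p - 2) * b ^ 2 + c₁ * |b| ^ p := by
  obtain ⟨c, hc₁, hc⟩ := exists_abs_one_add_rpow_le hp hκ
  refine ⟨c, by linarith, fun a b => ?_⟩
  rcases eq_or_ne a 0 with rfl | ha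
  · simpa [zero_rpow (by linarith : p ≠ 0), zero_rpow (by linarith : p - 2 ≠ 0)] using
      le_mul_of_one_le_left (rpow_nonneg (abs_nonneg b) p) hc₁
  have hscale : ∀ x : ℝ, |a| ^ p * |x / a| ^ p = |x| ^ p := fun x => by
    rw [← mul_rpow (abs_nonneg a) (abs_nonneg _), ← abs_mul, mul_div_cancel₀ _ ha]
  calc |a + b| ^ p = |a| ^ p * |1 + b / a| ^ p := by rw [← hscale, add_div, div_self ha]
    _ ≤ |a| ^ p * (1 + p * (b / a) + (p * (p - 1) / 2 + κ) * (b / a) ^ 2 + c * |b / a| ^ p) :=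
      mul_le_mul_of_nonneg_left (hc _) (by positivity)
    _ = _ := by
      rw [← abs_rpow_sub_two_mul_sq ha p] at hscale ⊢
      rw [mul_add, mul_left_comm _ c, hscale]
      field_simp
end

section
/- Let p > 2 and κ > 0. There exists a constant c_0 = c_0(p,κ) > 0 such that for all vectors y, z in ℝ^n: |y+z|^p ≥ |y|^p + p|y|^(p-2)⟨y,z⟩ + ((1-κ)/2)·(p|y|^(p-2)|z|^2 + p(p-2)|w|^(p-2)(|y| - |y+z|)^2) + c_0|z|^p, where w = y if |y| ≤ |y+z| and w = (|y+z|/|y|)^(1/(p-2))·(y+z) otherwise. -/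
/-!
With `a = ‖y‖`, `b = ‖y + z‖`, `s = ‖z‖` one has `2⟪y, z⟫ = b² - a² - s²` and `|a - b| ≤ s ≤ a + b`,
so everything reduces to inequalities between three reals. The theorem is the convex combination,
with weights `1 - min κ 1` and `min κ 1`, of two lower bounds for `b ^ p`. The first is the case
`κ = 0`, `c₀ = 0`: since `‖w‖ ^ (p - 2)` is `a ^ (p - 2)` or `b ^ (p - 1) / a`, it is a one-variable
inequality in `b`, settled by the sign of a derivative (with weighted AM-GM when `b < a`). The second
is `b ^ p ≥ a ^ p + p a ^ (p - 2) ⟪y, z⟫ + 2 ^ (1 - p) s ^ p`; its defect is concave in `u = s²`, so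
it suffices to check the endpoints `u = (a ∓ b)²`. These are the collinear configurations, where it
is the one-dimensional inequality `a ^ p + p a ^ (p - 1) d + 2 ^ (1 - p) |d| ^ p ≤ |a + d| ^ p`.
-/

open Real Set

lemma le_of_hasDerivAt_nonneg {f f' : ℝ → ℝ} {l r : ℝ} (hlr : l ≤ r)
    (hf : ∀ x ∈ Icc l r, HasDerivAt f (f' x) x) (hf' : ∀ x ∈ Ioo l r, 0 ≤ f' x) :
    f l ≤ f r :=
  monotoneOn_of_hasDerivWithinAt_nonneg (convex_Icc l r)
    (fun x hx => (hf x hx).continuousAt.continuousWithinAt)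
    (fun x hx => (hf x (interior_subset hx)).hasDerivWithinAt)
    (by simpa only [interior_Icc] using hf') (left_mem_Icc.2 hlr) (right_mem_Icc.2 hlr) hlr

lemma le_of_hasDerivAt_nonpos {f f' : ℝ → ℝ} {l r : ℝ} (hlr : l ≤ r)
    (hf : ∀ x ∈ Icc l r, HasDerivAt f (f' x) x) (hf' : ∀ x ∈ Ioo l r, f' x ≤ 0) :
    f r ≤ f l :=
  antitoneOn_of_hasDerivWithinAt_nonpos (convex_Icc l r)
    (fun x hx => (hf x hx).continuousAt.continuousWithinAt)
    (fun x hx => (hf x (interior_subset hx)).hasDerivWithinAt)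
    (by simpa only [interior_Icc] using hf') (left_mem_Icc.2 hlr) (right_mem_Icc.2 hlr) hlr

lemma rpow_eq_rpow_mul_self {a r s : ℝ} (ha : 0 ≤ a) (hrs : r = s + 1) (hr : r ≠ 0) :
    a ^ r = a ^ s * a := by
  rw [hrs] at hr ⊢
  exact rpow_add_one' ha hr

lemma taylor₁_le_rpow_of_le {q a b : ℝ} (hq : 1 ≤ q) (ha : 0 ≤ a) (hab : a ≤ b) :
    a ^ q + q * a ^ (q - 1) * (b - a) ≤ b ^ q := by
  have hf := le_of_hasDerivAt_nonneg (f := fun x => x ^ q - q * a ^ (q - 1) * (x - a)) hab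
    (fun x _ => (hasDerivAt_rpow_const (Or.inr hq)).sub
      (((hasDerivAt_id x).sub_const a).const_mul _))
    (fun x hx => by
      have := rpow_le_rpow ha hx.1.le (by linarith : 0 ≤ q - 1)
      simp only [mul_one]
      linear_combination q * this)
  norm_num at hf
  linarith

lemma taylor₂_le_rpow_of_le {p a b : ℝ} (hp : 2 ≤ p) (ha : 0 ≤ a) (hab : a ≤ b) :
    a ^ p + p / 2 * a ^ (p - 2) * (b ^ 2 - a ^ 2) + p * (p - 2) / 2 * a ^ (p - 2) * (a - b) ^ 2
      ≤ b ^ p := by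
  have hf := le_of_hasDerivAt_nonneg (f := fun x => x ^ p - p / 2 * a ^ (p - 2) * (x ^ 2 - a ^ 2)
      - p * (p - 2) / 2 * a ^ (p - 2) * (x - a) ^ 2) hab
    (fun x _ => (((hasDerivAt_rpow_const (Or.inr (by linarith))).sub
      (((hasDerivAt_pow 2 x).sub_const _).const_mul _)).sub
      ((((hasDerivAt_id x).sub_const a).pow 2).const_mul _)))
    (fun x hx => by
      have htan := taylor₁_le_rpow_of_le (by linarith : 1 ≤ p - 1) ha hx.1.le
      rw [show p - 1 - 1 = p - 2 by ring,
        rpow_eq_rpow_mul_self ha (show p - 1 = p - 2 + 1 by ring) (by linarith)] at htan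
      norm_num
      linear_combination p * htan)
  norm_num at hf
  linarith

lemma rpow_mul_add_mul_sub_le_rpow_add_one {q x a : ℝ} (hq : 0 ≤ q) (hx : 0 ≤ x) (hxa : x ≤ a) :
    x ^ q * (a + q * (a - x)) ≤ a ^ (q + 1) := by
  have hy : 0 ≤ a + q * (a - x) := by nlinarith
  have hq1 : 0 < q + 1 := by linarith
  -- weighted AM-GM with weights `q/(q+1)` and `1/(q+1)`: the arithmetic mean is exactly `a`
  have hmean := geom_mean_le_arith_mean2_weighted (w₁ := q / (q + 1)) (w₂ := 1 / (q + 1))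
    (by positivity) (by positivity) hx hy (by field_simp)
  rw [show q / (q + 1) * x + 1 / (q + 1) * (a + q * (a - x)) = a by field_simp; ring] at hmean
  have := rpow_le_rpow (by positivity) hmean hq1.le
  rwa [mul_rpow (by positivity) (by positivity), ← rpow_mul hx, ← rpow_mul hy,
    div_mul_cancel₀ _ hq1.ne', one_div_mul_cancel hq1.ne', rpow_one] at this

lemma taylor₂_le_rpow_of_lt {p a b : ℝ} (hp : 2 ≤ p) (hb : 0 ≤ b) (hba : b < a) :
    a ^ p + p / 2 * a ^ (p - 2) * (b ^ 2 - a ^ 2)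
        + p * (p - 2) / 2 * (b ^ (p - 1) / a) * (a - b) ^ 2 ≤ b ^ p := by
  have ha : 0 < a := hb.trans_lt hba
  have hf := le_of_hasDerivAt_nonpos (f := fun x => x ^ p - p / 2 * a ^ (p - 2) * (x ^ 2 - a ^ 2)
      - p * (p - 2) / 2 * (x ^ (p - 1) / a) * (a - x) ^ 2) hba.le
    (fun x _ => (((hasDerivAt_rpow_const (Or.inr (by linarith))).sub
      (((hasDerivAt_pow 2 x).sub_const _).const_mul _)).sub
      ((((hasDerivAt_rpow_const (Or.inr (by linarith))).div_const a).const_mul _).mul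
        (((hasDerivAt_const x a).sub (hasDerivAt_id x)).pow 2))))
    (fun x hx => by
      have hx0 : 0 ≤ x := hb.trans hx.1.le
      have hamgm := rpow_mul_add_mul_sub_le_rpow_add_one (by linarith : 0 ≤ p - 2) hx0 hx.2.le
      rw [show p - 2 + 1 = p - 1 by ring,
        rpow_eq_rpow_mul_self ha.le (show p - 1 = p - 2 + 1 by ring) (by linarith)] at hamgm
      rw [show p - 1 - 1 = p - 2 by ring,
        rpow_eq_rpow_mul_self hx0 (show p - 1 = p - 2 + 1 by ring) (by linarith)]
      have hsq : 0 ≤ p * (p - 2) * (p - 1) / 2 * x ^ (p - 2) * (a - x) ^ 2 := by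
        have : 0 ≤ p - 2 := by linarith
        have : 0 ≤ p - 1 := by linarith
        positivity
      simp only [Pi.sub_apply, id, Nat.cast_ofNat]
      -- `a f'(x) = 2px (x^(p-2) (a + (p-2)(a-x)) - a^(p-1)) - p(p-1)(p-2) x^(p-2) (a-x)²`
      rw [← mul_le_mul_iff_of_pos_left ha, mul_zero]
      field_simp
      norm_num
      linear_combination (2 * p * x) * hamgm + 2 * hsq)
  norm_num at hf
  linarith

lemma taylor₁_add_rpow_le_add_rpow {p a d : ℝ} (hp : 2 ≤ p) (ha : 0 ≤ a) (hd : 0 ≤ d) :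
    a ^ p + p * a ^ (p - 1) * d + d ^ p ≤ (a + d) ^ p := by
  have hf := le_of_hasDerivAt_nonneg (f := fun t => (a + t) ^ p - p * a ^ (p - 1) * t - t ^ p) hd
    (fun t _ => ((((hasDerivAt_id t).const_add a).rpow_const (Or.inr (by linarith))).sub
      ((hasDerivAt_id t).const_mul _)).sub (hasDerivAt_rpow_const (Or.inr (by linarith))))
    (fun t ht => by
      have := add_rpow_le_rpow_add ha ht.1.le (by linarith : 1 ≤ p - 1)
      simp only [id]
      linear_combination p * this)
  simp only [add_zero, mul_zero, sub_zero, zero_rpow (by linarith : p ≠ 0)] at hf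
  linarith

lemma taylor₁_add_sq_le_add_rpow {p a d : ℝ} (hp : 2 ≤ p) (had : -a ≤ d) (hd : d ≤ 0) :
    a ^ p + p * a ^ (p - 1) * d + p / 2 * a ^ (p - 2) * d ^ 2 ≤ (a + d) ^ p := by
  have ha : 0 ≤ a := by linarith
  have hf := le_of_hasDerivAt_nonpos
    (f := fun t => (a + t) ^ p - p * a ^ (p - 1) * t - p / 2 * a ^ (p - 2) * t ^ 2) hd
    (fun t _ => ((((hasDerivAt_id t).const_add a).rpow_const (Or.inr (by linarith))).sub
      ((hasDerivAt_id t).const_mul _)).sub ((hasDerivAt_pow 2 t).const_mul _))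
    (fun t ht => by
      have hat : 0 ≤ a + t := by linarith [ht.1]
      have hmono := rpow_le_rpow hat (by linarith [ht.2] : a + t ≤ a) (by linarith : 0 ≤ p - 2)
      simp only [id]
      rw [rpow_eq_rpow_mul_self hat (show p - 1 = p - 2 + 1 by ring) (by linarith),
        rpow_eq_rpow_mul_self ha (show p - 1 = p - 2 + 1 by ring) (by linarith)]
      norm_num
      linear_combination p * mul_le_mul_of_nonneg_right hmono hat)
  norm_num at hf
  linarith

lemma two_rpow_mul_add_rpow_le {p a b : ℝ} (hp : 1 ≤ p) (ha : 0 ≤ a) (hb : 0 ≤ b) :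
    2 ^ (1 - p) * (a + b) ^ p ≤ a ^ p + b ^ p := by
  lift a to NNReal using ha
  lift b to NNReal using hb
  have h := NNReal.rpow_add_le_mul_rpow_add_rpow a b hp
  have h2 : (2:NNReal) ^ (1 - p) * 2 ^ (p - 1) = 1 := by
    rw [← NNReal.rpow_add two_ne_zero]; simp
  have : 2 ^ (1 - p) * (a + b) ^ p ≤ 2 ^ (1 - p) * (2 ^ (p - 1) * (a ^ p + b ^ p)) := by gcongr
  rw [← mul_assoc, h2, one_mul] at this
  exact_mod_cast this

lemma taylor₁_add_abs_rpow_le_abs_add_rpow {p a : ℝ} (hp : 2 ≤ p) (ha : 0 ≤ a) (d : ℝ) :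
    a ^ p + p * a ^ (p - 1) * d + 2 ^ (1 - p) * |d| ^ p ≤ |a + d| ^ p := by
  have hc : (2:ℝ) ^ (1 - p) ≤ 1 := rpow_le_one_of_one_le_of_nonpos one_le_two (by linarith)
  rcases le_total 0 d with hd | hd
  · rw [abs_of_nonneg hd, abs_of_nonneg (by linarith)]
    linear_combination taylor₁_add_rpow_le_add_rpow hp ha hd
      + mul_le_mul_of_nonneg_right hc (rpow_nonneg hd p)
  rcases le_total (-a) d with had | had
  · rw [abs_of_nonpos hd, abs_of_nonneg (by linarith)]
    have hpow : (-d) ^ p ≤ a ^ (p - 2) * d ^ 2 := by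
      have e : (-d) ^ p = (-d) ^ (p - 2) * d ^ 2 := by
        rw [← neg_sq, ← rpow_natCast, ← rpow_add' (by linarith) (by norm_num; linarith)]
        norm_num
      rw [e]
      gcongr <;> linarith
    have hquad : 0 ≤ (p / 2 - 1) * (a ^ (p - 2) * d ^ 2) :=
      mul_nonneg (by linarith) (by positivity)
    linear_combination taylor₁_add_sq_le_add_rpow hp had hd
      + mul_le_mul_of_nonneg_right hc (rpow_nonneg (by linarith : 0 ≤ -d) p) + hpow + hquad
  · rw [abs_of_nonpos hd, abs_of_nonpos (by linarith)]
    have := two_rpow_mul_add_rpow_le (p := p) (by linarith) ha (by linarith : 0 ≤ -(a + d))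
    rw [show a + -(a + d) = -d by ring] at this
    have hap : a ^ p = a ^ (p - 1) * a :=
      rpow_eq_rpow_mul_self ha (show p = p - 1 + 1 by ring) (by linarith)
    have : a ^ (p - 1) * (2 * a + p * d) ≤ 0 :=
      mul_nonpos_of_nonneg_of_nonpos (rpow_nonneg ha _) (by nlinarith)
    linarith

lemma taylor₁_add_rpow_le_rpow_of_abs_sub_le {p a b s : ℝ} (hp : 2 ≤ p) (ha : 0 ≤ a) (hb : 0 ≤ b)
    (hs₁ : |a - b| ≤ s) (hs₂ : s ≤ a + b) :
    a ^ p + p / 2 * a ^ (p - 2) * (b ^ 2 - a ^ 2 - s ^ 2) + 2 ^ (1 - p) * s ^ p ≤ b ^ p := by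
  set α := p / 2 * a ^ (p - 2)
  set g : ℝ → ℝ := fun u => 2 ^ (1 - p) * u ^ (p / 2) - α * u with hg
  have hconv : ConvexOn ℝ (Ici 0) g :=
    ((convexOn_rpow (by linarith : 1 ≤ p / 2)).smul (by positivity)).sub
      ((concaveOn_id (convex_Ici 0)).smul (by positivity))
  have hsq (x : ℝ) : (x ^ 2) ^ (p / 2) = |x| ^ p := by
    rw [← sq_abs, ← rpow_natCast, ← rpow_mul (abs_nonneg x), Nat.cast_ofNat,
      mul_div_cancel₀ _ two_ne_zero]
  have hap : a ^ (p - 1) = a ^ (p - 2) * a := rpow_eq_rpow_mul_self ha (by ring) (by linarith)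
  have hleft : g ((a - b) ^ 2) ≤ b ^ p - a ^ p - α * (b ^ 2 - a ^ 2) := by
    have := taylor₁_add_abs_rpow_le_abs_add_rpow hp ha (b - a)
    rw [show a + (b - a) = b by ring, abs_of_nonneg hb, hap, abs_sub_comm] at this
    simp only [hg, hsq]
    linear_combination this
  have hright : g ((a + b) ^ 2) ≤ b ^ p - a ^ p - α * (b ^ 2 - a ^ 2) := by
    have := taylor₁_add_abs_rpow_le_abs_add_rpow hp ha (-(a + b))
    rw [show a + -(a + b) = -b by ring, abs_neg, abs_neg, abs_of_nonneg hb,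
      abs_of_nonneg (by linarith), hap] at this
    simp only [hg, hsq, abs_of_nonneg (by linarith : 0 ≤ a + b)]
    linear_combination this
  have hs : 0 ≤ s := (abs_nonneg _).trans hs₁
  have hseg : s ^ 2 ∈ segment ℝ ((a - b) ^ 2) ((a + b) ^ 2) := by
    rw [segment_eq_Icc (by nlinarith)]
    exact ⟨by simpa only [sq_abs] using pow_le_pow_left₀ (abs_nonneg _) hs₁ 2,
      pow_le_pow_left₀ hs hs₂ 2⟩
  have := (hconv.le_on_segment (mem_Ici.2 (sq_nonneg _)) (mem_Ici.2 (sq_nonneg _)) hseg).trans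
    (max_le hleft hright)
  simp only [hg, hsq, abs_of_nonneg hs] at this
  linear_combination this

section InnerProductSpace

variable {E : Type*} [NormedAddCommGroup E] [InnerProductSpace ℝ E]

noncomputable def pivot (p : ℝ) (y z : E) : E :=
  if ‖y‖ ≤ ‖y + z‖ then y else (‖y + z‖ / ‖y‖) ^ (1 / (p - 2)) • (y + z)

lemma norm_pivot_rpow_of_lt {p : ℝ} (hp : 2 < p) {y z : E} (h : ‖y + z‖ < ‖y‖) :
    ‖pivot p y z‖ ^ (p - 2) = ‖y + z‖ ^ (p - 1) / ‖y‖ := by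
  have hy : 0 < ‖y‖ := (norm_nonneg _).trans_lt h
  have hq : 0 ≤ ‖y + z‖ / ‖y‖ := by positivity
  rw [pivot, if_neg h.not_ge, norm_smul, norm_of_nonneg (rpow_nonneg hq _),
    mul_rpow (rpow_nonneg hq _) (norm_nonneg _), ← rpow_mul hq,
    one_div_mul_cancel (by linarith), rpow_one,
    rpow_eq_rpow_mul_self (norm_nonneg _) (show p - 1 = p - 2 + 1 by ring) (by linarith)]
  field_simp

lemma taylor₂_le_norm_add_rpow {p : ℝ} (hp : 2 < p) (y z : E) :
    ‖y‖ ^ p + p * ‖y‖ ^ (p - 2) * inner ℝ y z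
        + 1 / 2 * (p * ‖y‖ ^ (p - 2) * ‖z‖ ^ 2
          + p * (p - 2) * ‖pivot p y z‖ ^ (p - 2) * (‖y‖ - ‖y + z‖) ^ 2)
      ≤ ‖y + z‖ ^ p := by
  have hinner := norm_add_sq_real y z
  rcases le_or_gt ‖y‖ ‖y + z‖ with h | h
  · have := taylor₂_le_rpow_of_le hp.le (norm_nonneg y) h
    rw [pivot, if_pos h]
    linear_combination this - p / 2 * ‖y‖ ^ (p - 2) * hinner
  · have := taylor₂_le_rpow_of_lt hp.le (norm_nonneg (y + z)) h
    rw [norm_pivot_rpow_of_lt hp h]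
    linear_combination this - p / 2 * ‖y‖ ^ (p - 2) * hinner

lemma taylor₁_add_rpow_le_norm_add_rpow {p : ℝ} (hp : 2 ≤ p) (y z : E) :
    ‖y‖ ^ p + p * ‖y‖ ^ (p - 2) * inner ℝ y z + 2 ^ (1 - p) * ‖z‖ ^ p ≤ ‖y + z‖ ^ p := by
  have hinner := norm_add_sq_real y z
  have hs₁ : |‖y‖ - ‖y + z‖| ≤ ‖z‖ := by
    simpa using abs_norm_sub_norm_le y (y + z)
  have hs₂ : ‖z‖ ≤ ‖y‖ + ‖y + z‖ := by
    simpa only [add_sub_cancel_left, add_comm] using norm_sub_le (y + z) y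
  have := taylor₁_add_rpow_le_rpow_of_abs_sub_le hp (norm_nonneg y) (norm_nonneg (y + z)) hs₁ hs₂
  linear_combination this - p / 2 * ‖y‖ ^ (p - 2) * hinner

end InnerProductSpace

lemma add_mul_add_min_mul_le {T Q C R κ : ℝ} (hκ : 0 < κ) (hQ : 0 ≤ Q)
    (h₁ : T + 1 / 2 * Q ≤ R) (h₂ : T + C ≤ R) :
    T + (1 - κ) / 2 * Q + min κ 1 * C ≤ R := by
  have hμ₁ : min κ 1 ≤ 1 := min_le_right _ _
  have hμκ : (1 - κ) / 2 * Q ≤ (1 - min κ 1) / 2 * Q := by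
    gcongr
    exact min_le_left _ _
  linear_combination hμκ + (1 - min κ 1) * h₁ + min κ 1 * h₂

theorem taylor_lower_bound_norm_rpow (p κ : ℝ) (hp : 2 < p) (hκ : 0 < κ) :
    ∃ c₀ > (0:ℝ), ∀ (n : ℕ) (y z : EuclideanSpace ℝ (Fin n)),
      ‖y‖ ^ p + p * ‖y‖ ^ (p - 2) * (inner ℝ y z : ℝ)
        + (1 - κ) / 2 *
          (p * ‖y‖ ^ (p - 2) * ‖z‖ ^ 2
            + p * (p - 2) *
              ‖if ‖y‖ ≤ ‖y + z‖ then y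
                else (‖y + z‖ / ‖y‖) ^ (1/(p-2)) • (y + z)‖ ^ (p - 2)
              * (‖y‖ - ‖y + z‖) ^ 2)
        + c₀ * ‖z‖ ^ p ≤ ‖y + z‖ ^ p := by
  refine ⟨min κ 1 * 2 ^ (1 - p), by positivity, fun n y z => ?_⟩
  have hQ : 0 ≤ p * ‖y‖ ^ (p - 2) * ‖z‖ ^ 2 + p * (p - 2) * ‖pivot p y z‖ ^ (p - 2)
      * (‖y‖ - ‖y + z‖) ^ 2 := by
    have : 0 < p - 2 := by linarith
    positivity
  rw [mul_assoc (min κ 1)]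
  exact add_mul_add_min_mul_le hκ hQ (taylor₂_le_norm_add_rpow hp y z)
    (taylor₁_add_rpow_le_norm_add_rpow hp.le y z)
end

section
/- Let N ≥ 1, p > 1, b + 1 - a > 0, S = (N - 1 - (p-1)a - b)/p > 0, c = ((p-1)a + b + 1)/p, and for k ∈ ℝ, λ > 0 set v(k,λ)(x) = k·C₁·λ^(S/(b+1-a))·exp(-λ|x|^(b+1-a)/(b+1-a)), where C₁ is chosen so that ‖v(1,1)‖_{L^p_c} = 1. Then ‖v(k,λ)‖_{L^p_a} = |k|·(S/λ)^(1/p), where ‖u‖_{L^p_a} = (∫_{ℝ^N}|x|^{-pa}|u|^p dx)^(1/p). -/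
/-!
Polar coordinates turn `I(e, t) = ∫ ‖x‖^e exp(-t ‖x‖^m)` over a `d`-dimensional space into a
Gamma integral proportional to `t^(-(d+e)/m) Γ((d+e)/m)`. So raising the weight by `‖x‖^m`
multiplies `I` by `(d+e)/(m t)` (as `Γ(s+1) = s Γ(s)`), and replacing `t` by `λ t` multiplies it
by `λ^(-(d+e)/m)`. With `m = b+1-a`, `-p a = -p c + m` and `N - p c = p S`, the `p`-th power of
the `L^p_a` norm is `|k|^p C₁^p λ^(pS/m) I(-pc + m, λp/m) = |k|^p C₁^p (S/λ) I(-pc, p/m)`,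
and `C₁^p I(-pc, p/m) = 1`.
-/

open MeasureTheory Real Set Metric Module

section RadialIntegral

variable {E : Type*} [NormedAddCommGroup E] [NormedSpace ℝ E] [FiniteDimensional ℝ E]
  [Nontrivial E] [MeasurableSpace E] [BorelSpace E] (μ : Measure E) [μ.IsAddHaarMeasure]
  {e m t : ℝ}

theorem integral_norm_rpow_mul_exp_neg_mul_rpow (hm : 0 < m) (ht : 0 < t)
    (he : 0 < finrank ℝ E + e) :
    ∫ x, ‖x‖ ^ e * exp (-t * ‖x‖ ^ m) ∂μ =
      finrank ℝ E * μ.real (ball 0 1) *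
        (t ^ (-(finrank ℝ E + e) / m) * (1 / m) * Gamma ((finrank ℝ E + e) / m)) := by
  have hd : 1 ≤ finrank ℝ E := finrank_pos
  rw [integral_fun_norm_addHaar μ (fun r ↦ r ^ e * exp (-t * r ^ m)), nsmul_eq_mul, smul_eq_mul]
  have hradial : ∫ y in Ioi (0 : ℝ), y ^ (finrank ℝ E - 1) • (y ^ e * exp (-t * y ^ m))
      = ∫ y in Ioi (0 : ℝ), y ^ ((finrank ℝ E : ℝ) - 1 + e) * exp (-t * y ^ m) := by
    refine setIntegral_congr_fun measurableSet_Ioi fun y (hy : 0 < y) ↦ ?_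
    rw [smul_eq_mul, ← rpow_natCast, Nat.cast_sub hd, Nat.cast_one, ← mul_assoc,
      ← rpow_add hy]
  rw [hradial, integral_rpow_mul_exp_neg_mul_rpow hm (by linarith) ht,
    show (finrank ℝ E : ℝ) - 1 + e + 1 = finrank ℝ E + e by ring]
  ring

theorem integral_norm_rpow_mul_exp_neg_mul_rpow_pos (hm : 0 < m) (ht : 0 < t)
    (he : 0 < finrank ℝ E + e) :
    0 < ∫ x, ‖x‖ ^ e * exp (-t * ‖x‖ ^ m) ∂μ := by
  have hball : 0 < μ.real (ball 0 1) :=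
    ENNReal.toReal_pos (measure_ball_pos μ 0 one_pos).ne' measure_ball_lt_top.ne
  have hΓ := Gamma_pos_of_pos (div_pos he hm)
  have hd : (0 : ℝ) < finrank ℝ E := Nat.cast_pos.mpr finrank_pos
  rw [integral_norm_rpow_mul_exp_neg_mul_rpow μ hm ht he]
  exact mul_pos (mul_pos hd hball) (mul_pos (mul_pos (rpow_pos_of_pos ht _) (by positivity)) hΓ)

theorem integral_norm_rpow_mul_exp_neg_mul_mul_rpow {s : ℝ} (hs : 0 < s) (hm : 0 < m)
    (ht : 0 < t) (he : 0 < finrank ℝ E + e) :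
    ∫ x, ‖x‖ ^ e * exp (-(s * t) * ‖x‖ ^ m) ∂μ =
      s ^ (-(finrank ℝ E + e) / m) * ∫ x, ‖x‖ ^ e * exp (-t * ‖x‖ ^ m) ∂μ := by
  rw [integral_norm_rpow_mul_exp_neg_mul_rpow μ hm (mul_pos hs ht) he,
    integral_norm_rpow_mul_exp_neg_mul_rpow μ hm ht he, mul_rpow hs.le ht.le]
  ring

theorem integral_norm_rpow_add_mul_exp_neg_mul_rpow (hm : 0 < m) (ht : 0 < t)
    (he : 0 < finrank ℝ E + e) :
    ∫ x, ‖x‖ ^ (e + m) * exp (-t * ‖x‖ ^ m) ∂μ =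
      (finrank ℝ E + e) / (m * t) * ∫ x, ‖x‖ ^ e * exp (-t * ‖x‖ ^ m) ∂μ := by
  have he' : 0 < finrank ℝ E + (e + m) := by linarith
  have hpow : -(finrank ℝ E + (e + m)) / m = -(finrank ℝ E + e) / m + -1 := by
    field_simp; ring
  have hΓ : (finrank ℝ E + (e + m)) / m = (finrank ℝ E + e) / m + 1 := by
    field_simp; ring
  rw [integral_norm_rpow_mul_exp_neg_mul_rpow μ hm ht he',
    integral_norm_rpow_mul_exp_neg_mul_rpow μ hm ht he, hpow, hΓ, rpow_add ht, rpow_neg_one,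
    Gamma_add_one (div_pos he hm).ne']
  field_simp

end RadialIntegral

theorem abs_mul_rpow_mul_exp_rpow (k C L α u : ℝ) {p : ℝ} (hC : 0 ≤ C) (hL : 0 < L) :
    |k * C * L ^ α * exp u| ^ p = |k| ^ p * C ^ p * L ^ (α * p) * exp (u * p) := by
  rw [abs_mul, abs_mul, abs_mul, abs_of_nonneg hC, abs_of_pos (rpow_pos_of_pos hL α),
    abs_of_pos (exp_pos u), mul_rpow (by positivity) (exp_pos u).le,
    mul_rpow (by positivity) (rpow_pos_of_pos hL α).le, mul_rpow (abs_nonneg k) hC,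
    ← rpow_mul hL.le, ← exp_mul]

theorem Lpa_norm_of_minimizer (N : ℕ) (hN : 1 ≤ N) (p a b k lam S c C₁ : ℝ)
    (hp : 1 < p) (hba : 0 < b + 1 - a) (hlam : 0 < lam)
    (hS : S = ((N:ℝ) - 1 - (p - 1) * a - b) / p) (hSpos : 0 < S)
    (hc : c = ((p - 1) * a + b + 1) / p)
    (hC₁ : C₁ = (∫ x : EuclideanSpace ℝ (Fin N),
        ‖x‖ ^ (-(p * c)) * Real.exp (-(p * ‖x‖ ^ (b + 1 - a) / (b + 1 - a)))) ^ (-(1:ℝ)/p)) :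
    (∫ x : EuclideanSpace ℝ (Fin N),
        ‖x‖ ^ (-(p * a)) *
          |k * C₁ * lam ^ (S / (b + 1 - a)) *
            Real.exp (-(lam * ‖x‖ ^ (b + 1 - a) / (b + 1 - a)))| ^ p) ^ (1/p)
      = |k| * (S / lam) ^ (1/p) := by
  have hp0 : 0 < p := by linarith
  have : Nontrivial (EuclideanSpace ℝ (Fin N)) :=
    Module.nontrivial_of_finrank_pos (R := ℝ) (by rw [finrank_euclideanSpace_fin]; omega)
  set m := b + 1 - a
  have hdim : (finrank ℝ (EuclideanSpace ℝ (Fin N)) : ℝ) + -(p * c) = p * S := by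
    rw [finrank_euclideanSpace_fin, hS, hc]; field_simp; ring
  have hpa : -(p * a) = -(p * c) + m := by rw [hc]; field_simp; ring
  have hdim_pos : 0 < (finrank ℝ (EuclideanSpace ℝ (Fin N)) : ℝ) + -(p * c) :=
    hdim ▸ mul_pos hp0 hSpos
  set R := ∫ x : EuclideanSpace ℝ (Fin N), ‖x‖ ^ (-(p * c)) * exp (-(p / m) * ‖x‖ ^ m)
  have hRpos : 0 < R := integral_norm_rpow_mul_exp_neg_mul_rpow_pos _ hba (div_pos hp0 hba)
    hdim_pos
  have hC₁R : C₁ = R ^ (-1 / p) := by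
    simp only [hC₁, R, neg_mul, mul_div_right_comm p]
  have hC₁p : C₁ ^ p = R⁻¹ := by
    rw [hC₁R, ← rpow_mul hRpos.le, div_mul_cancel₀ _ hp0.ne', rpow_neg_one]
  have hintegrand (x : EuclideanSpace ℝ (Fin N)) :
      ‖x‖ ^ (-(p * a)) * |k * C₁ * lam ^ (S / m) * exp (-(lam * ‖x‖ ^ m / m))| ^ p =
        |k| ^ p * C₁ ^ p * lam ^ (S / m * p) *
          (‖x‖ ^ (-(p * c) + m) * exp (-(lam * (p / m)) * ‖x‖ ^ m)) := by
    rw [abs_mul_rpow_mul_exp_rpow _ _ _ _ _ (hC₁R ▸ rpow_nonneg hRpos.le _) hlam, hpa,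
      show -(lam * ‖x‖ ^ m / m) * p = -(lam * (p / m)) * ‖x‖ ^ m by ring]
    ring
  have hlam_pow : lam ^ (S / m * p) * lam ^ (-(p * S + m) / m) = lam⁻¹ := by
    rw [← rpow_add hlam, show S / m * p + -(p * S + m) / m = -1 by field_simp; ring,
      rpow_neg_one]
  simp only [hintegrand]
  rw [integral_const_mul, integral_norm_rpow_mul_exp_neg_mul_mul_rpow _ hlam hba
      (div_pos hp0 hba) (by linarith), ← add_assoc, hdim,
    integral_norm_rpow_add_mul_exp_neg_mul_rpow _ hba (div_pos hp0 hba) hdim_pos, hdim,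
    hC₁p]
  calc (|k| ^ p * R⁻¹ * lam ^ (S / m * p) *
        (lam ^ (-(p * S + m) / m) * (p * S / (m * (p / m)) * R))) ^ (1 / p)
      = (|k| ^ p * (S / lam)) ^ (1 / p) := by
        rw [show p * S / (m * (p / m)) = S by field_simp, div_eq_mul_inv S lam, ← hlam_pow]
        field_simp
    _ = |k| * (S / lam) ^ (1 / p) := by
        rw [mul_rpow (by positivity) (by positivity), one_div, rpow_rpow_inv (abs_nonneg k) hp0.ne']
end

section
/- Let p ≥ 2, S > 0, λ, ρ > 0, t = ρ/λ, and define I(λ,ρ) = (λ^((p-1)/p)·ρ^(1/p)/((1-1/p)λ + (1/p)ρ))^(N(p-1)/p) for N ≥ 1. If 0 ≤ 1 - I(λ,ρ) ≤ 4ε for sufficiently small ε > 0, then |1 - t| ≤ C·ε^(1/2) for some constant C depending only on N and p. -/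
open Real

private lemma bern {x q : ℝ} (hx : -1 ≤ x) (hq : 1 ≤ q) : 1 + q * x ≤ (1 + x) ^ q :=
  one_add_mul_self_le_rpow_one_add hx hq

private lemma quad {s p : ℝ} (hs : 0 ≤ s) (hp : 2 ≤ p) :
    1 + p * (s - 1) + p / 2 * (s - 1) ^ 2 ≤ s ^ p := by
  have hx : -1 ≤ 2 * (s - 1) + (s - 1) ^ 2 := by nlinarith [sq_nonneg s]
  have hq : (1:ℝ) ≤ p / 2 := by linarith
  have h := bern hx hq
  have h2 : (1 + (2 * (s - 1) + (s - 1) ^ 2)) = s ^ 2 := by ring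
  have h3 : ((s ^ 2 : ℝ)) ^ (p / 2) = s ^ p := by
    rw [← rpow_natCast s 2, ← rpow_mul hs]
    congr 1
    push_cast
    ring
  rw [h2, h3] at h
  linarith

private lemma upperB {s p : ℝ} (hs : 0 < s) (hp : 1 ≤ p) :
    s ^ p - 1 ≤ p * (s ^ p - s ^ (p - 1)) := by
  have hx : -1 ≤ 1 / s - 1 := by
    have : 0 ≤ 1 / s := by positivity
    linarith
  have h := bern hx hp
  have h1 : (1 + (1 / s - 1)) = 1 / s := by ring
  rw [h1, div_rpow zero_le_one hs.le, one_rpow] at h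
  have hsp : 0 < s ^ p := rpow_pos_of_pos hs p
  have h2 : s ^ (p - 1) = s ^ p / s := by rw [rpow_sub hs, rpow_one]
  have h3 : (1 + p * (1 / s - 1)) * s ^ p ≤ 1 := by
    have h5 := mul_le_mul_of_nonneg_right h hsp.le
    have h6 : 1 / s ^ p * s ^ p = 1 := by field_simp
    linarith
  have h4 : (1 + p * (1 / s - 1)) * s ^ p = s ^ p + p * (s ^ (p - 1) - s ^ p) := by
    rw [h2]; field_simp
  rw [h4] at h3
  linarith


set_option maxHeartbeats 1000000 in
theorem pairing_close_implies_scales_close (N : ℕ) (hN : 1 ≤ N) (p : ℝ) (hp : 2 ≤ p) :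
    ∃ C > (0:ℝ), ∃ ε₀ > (0:ℝ), ∀ lam ρ ε : ℝ, 0 < lam → 0 < ρ → 0 < ε → ε < ε₀ →
      0 ≤ 1 - (lam ^ ((p - 1)/p) * ρ ^ (1/p) / ((1 - 1/p) * lam + (1/p) * ρ))
              ^ ((N:ℝ) * (p - 1) / p) →
      1 - (lam ^ ((p - 1)/p) * ρ ^ (1/p) / ((1 - 1/p) * lam + (1/p) * ρ))
            ^ ((N:ℝ) * (p - 1) / p) ≤ 4 * ε →
      |1 - ρ / lam| ≤ C * ε ^ ((1:ℝ)/2) := by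
  have hp0 : (0:ℝ) < p := by linarith
  have hp1 : (1:ℝ) ≤ p := by linarith
  refine ⟨24 * p ^ 2, by positivity, 1/16, by norm_num, ?_⟩
  intro lam ρ ε hlam hρ hε hε0 h0 h4
  set t : ℝ := ρ / lam with ht
  have ht0 : 0 < t := div_pos hρ hlam
  set s : ℝ := t ^ (1/p) with hsdef
  have hs0 : 0 < s := rpow_pos_of_pos ht0 _
  set D : ℝ := 1 - 1/p + t/p with hD
  have hp11 : (0:ℝ) < 1 - 1/p := by
    rw [sub_pos, div_lt_one hp0]; linarith
  have hD0 : 0 < D := by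
    have : 0 < t/p := by positivity
    rw [hD]; linarith
  have hst : s ^ p = t := by
    rw [hsdef, ← rpow_mul ht0.le, one_div_mul_cancel hp0.ne', rpow_one]
  -- rewrite the pairing expression as s / D
  have e1 : lam ^ ((p - 1)/p) = lam / lam ^ (1/p) := by
    have h' : (p - 1)/p = 1 - 1/p := by field_simp
    rw [h', rpow_sub hlam, rpow_one]
  have e2 : s = ρ ^ (1/p) / lam ^ (1/p) := by
    rw [hsdef, ht, div_rpow hρ.le hlam.le]
  have e3 : (1 - 1/p) * lam + (1/p) * ρ = lam * D := by
    rw [hD, ht]; field_simp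
  have hlp : (0:ℝ) < lam ^ (1/p) := rpow_pos_of_pos hlam _
  have e4 : lam ^ ((p - 1)/p) * ρ ^ (1/p) = lam * s := by
    rw [e1, e2]; ring
  have hEXPR : lam ^ ((p - 1)/p) * ρ ^ (1/p) / ((1 - 1/p) * lam + (1/p) * ρ) = s / D := by
    rw [e4, e3, mul_div_mul_left _ _ hlam.ne']
  clear_value s D
  rw [hEXPR] at h0 h4
  set B : ℝ := s / D with hB
  clear_value B
  have hB0 : 0 < B := by rw [hB]; exact div_pos hs0 hD0
  set α : ℝ := (N:ℝ) * (p - 1) / p with hαdef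
  have hN1 : (1:ℝ) ≤ (N:ℝ) := by exact_mod_cast hN
  have hα2 : 1/2 ≤ α := by
    rw [hαdef, le_div_iff₀ hp0]
    have hh := mul_le_mul_of_nonneg_right hN1 (by linarith : (0:ℝ) ≤ p - 1)
    linarith
  have hα0 : 0 < α := by linarith
  -- quadratic Bernoulli
  have hq := quad hs0.le hp
  rw [hst] at hq
  have hq2 : (1 + p*(s-1) + p/2*(s-1)^2)/p ≤ t/p := by gcongr
  have hq3 : (1 + p*(s-1) + p/2*(s-1)^2)/p = 1/p + (s-1) + (s-1)^2/2 := by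
    field_simp
  have hDs : (s-1)^2 / 2 ≤ D - s := by
    rw [hq3] at hq2
    rw [hD]; linarith
  have hsD : s ≤ D := by
    have hssq : 0 ≤ (s-1)^2 := sq_nonneg _
    linarith
  have hB1 : B ≤ 1 := by rw [hB]; exact (div_le_one hD0).mpr hsD
  -- pass from B^α to B
  have h1B : 1 - B ≤ 8 * ε := by
    rcases le_or_gt 1 α with hα1 | hα1
    · have hmono : B ^ α ≤ B ^ (1:ℝ) := rpow_le_rpow_of_exponent_ge hB0 hB1 hα1
      rw [rpow_one] at hmono
      linarith
    · have hy0 : 0 < B ^ α := rpow_pos_of_pos hB0 _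
      have hb := bern (x := B ^ α - 1) (q := 1/α) (by linarith) (by rw [le_div_iff₀ hα0]; linarith)
      have hid : (1 + (B ^ α - 1)) ^ (1/α) = B := by
        rw [show (1 + (B ^ α - 1)) = B ^ α by ring, ← rpow_mul hB0.le,
          mul_one_div, div_self hα0.ne', rpow_one]
      rw [hid] at hb
      have h1α : 1/α ≤ 2 := by rw [div_le_iff₀ hα0]; linarith
      have hmul : (1/α)*(1 - B^α) ≤ 2*(1 - B^α) := mul_le_mul_of_nonneg_right h1α h0
      have hb2 : (1/α)*(B^α - 1) = -((1/α)*(1 - B^α)) := by ring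
      linarith
  -- B > 1/2 forces bounds on s, t, D
  have hD2s : D < 2 * s := by
    have hB12 : 1/2 < B := by linarith
    rw [hB, lt_div_iff₀ hD0] at hB12
    linarith
  have hsp1 : s ^ (p-1) * s = s ^ p := by
    have h' := rpow_add_one hs0.ne' (p-1)
    rw [sub_add_cancel] at h'
    rw [h']
  have hsp1nn : 0 ≤ s ^ (p-1) := rpow_nonneg hs0.le _
  have hs2p : s ^ (p-1) < 2*p := by
    have ht2 : t < 2*s*p := by
      have : t/p ≤ D := by rw [hD]; linarith
      have h' : t/p < 2*s := by linarith
      rw [div_lt_iff₀ hp0] at h'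
      linarith
    have h'' : s^(p-1) * s < (2*p) * s := by rw [hsp1, hst]; linarith
    exact lt_of_mul_lt_mul_right h'' hs0.le
  have hs4 : s ≤ 4 := by
    by_contra hc
    push_neg at hc
    have h41 : (4:ℝ)^(p-1) ≤ s^(p-1) := rpow_le_rpow (by norm_num) hc.le (by linarith)
    have h42 : 1 + (p-1)*3 ≤ (4:ℝ)^(p-1) := by
      have hbb := bern (x := (3:ℝ)) (q := p-1) (by norm_num) (by linarith)
      norm_num at hbb
      linarith
    linarith
  have ht8 : t ≤ 8*p := by
    have h' : s^(p-1) * s ≤ (2*p)*4 :=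
      mul_le_mul hs2p.le hs4 hs0.le (by linarith)
    rw [hsp1, hst] at h'
    linarith
  have hD9 : D ≤ 9 := by
    have h' : t/p ≤ 8 := by rw [div_le_iff₀ hp0]; linarith
    have h'' : 0 < 1/p := by positivity
    rw [hD]; linarith
  have hDsε : D - s ≤ 72*ε := by
    have hq4 : (D - s)/D = 1 - B := by rw [hB]; field_simp
    have h'' : D - s ≤ 8*ε*D := by
      have h3 : D - s = (D-s)/D * D := by field_simp
      rw [h3, hq4]
      exact mul_le_mul_of_nonneg_right h1B hD0.le
    have hh := mul_le_mul_of_nonneg_left hD9 hε.le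
    linarith
  have hsq : (s-1)^2 ≤ 144*ε := by linarith
  have habs : |s - 1| ≤ 12 * ε^((1:ℝ)/2) := by
    have h1 : |s-1| = Real.sqrt ((s-1)^2) := (Real.sqrt_sq_eq_abs _).symm
    have h2 : Real.sqrt ((s-1)^2) ≤ Real.sqrt (144*ε) := Real.sqrt_le_sqrt hsq
    have h3 : Real.sqrt (144*ε) = 12 * Real.sqrt ε := by
      rw [show (144:ℝ)*ε = 12^2*ε by norm_num, Real.sqrt_mul (by positivity),
        Real.sqrt_sq (by norm_num)]
    rw [← Real.sqrt_eq_rpow, ← h3, h1]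
    exact h2
  have hfin : |1 - t| ≤ 2*p^2 * |s - 1| := by
    rcases le_or_gt s 1 with hs1 | hs1
    · have ht1 : t ≤ 1 := by rw [← hst]; exact rpow_le_one hs0.le hs1 hp0.le
      have hb := bern (x := s-1) (q := p) (by linarith) hp1
      rw [show (1 + (s-1)) = s by ring, hst] at hb
      rw [abs_of_nonneg (by linarith : (0:ℝ) ≤ 1 - t),
        abs_of_nonpos (by linarith : s - 1 ≤ 0)]
      have hpp : (0:ℝ) ≤ p*(2*p - 1) := mul_nonneg hp0.le (by linarith)
      have hh := mul_nonneg (by linarith [hpp] : (0:ℝ) ≤ 2*p^2 - p) (by linarith : (0:ℝ) ≤ 1 - s)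
      linarith
    · have ht1 : 1 ≤ t := by
        have h' := rpow_le_rpow (by norm_num) hs1.le hp0.le
        rw [one_rpow, hst] at h'
        exact h'
      have hu := upperB hs0 hp1
      have he : s^p - s^(p-1) = s^(p-1)*(s-1) := by rw [← hsp1]; ring
      rw [he, hst] at hu
      rw [abs_of_nonpos (by linarith : 1 - t ≤ 0),
        abs_of_nonneg (by linarith : (0:ℝ) ≤ s - 1)]
      have hx1 : s^(p-1)*(s-1) ≤ 2*p*(s-1) :=
        mul_le_mul_of_nonneg_right hs2p.le (by linarith)
      have hh := mul_le_mul_of_nonneg_left hx1 hp0.le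
      linarith
  have hlast : 2*p^2 * |s-1| ≤ 2*p^2 * (12 * ε^((1:ℝ)/2)) :=
    mul_le_mul_of_nonneg_left habs (by positivity)
  calc |1 - t| ≤ 2*p^2 * |s-1| := hfin
    _ ≤ 2*p^2 * (12 * ε^((1:ℝ)/2)) := hlast
    _ = 24*p^2 * ε^((1:ℝ)/2) := by ring
end

section
/- Let N ≥ 1, p ≥ 2, b+1-a > 0, S = (N-1-(p-1)a-b)/p > 0, c = ((p-1)a+b+1)/p, λ > 0, and v = v(k,λ)(x) = k·C₁·λ^(S/(b+1-a))·exp(-λ|x|^(b+1-a)/(b+1-a)). Then v is a weak solution of -div(|x|^{-pb}|∇v|^{p-2}∇v) + (p-1)λ^p|x|^{-pa}|v|^{p-2}v - pSλ^{p-1}|x|^{-pc}|v|^{p-2}v = 0 on ℝ^N \ {0}. -/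
open MeasureTheory

theorem hasFDerivAt_norm_rpow_ne {E : Type*} [NormedAddCommGroup E] [InnerProductSpace ℝ E]
    {x : E} (hx : x ≠ 0) (s : ℝ) :
    HasFDerivAt (fun y : E ↦ ‖y‖ ^ s) ((s * ‖x‖ ^ (s - 2)) • innerSL ℝ x) x := by
  have hnx : (0:ℝ) < ‖x‖ := norm_pos_iff.mpr hx
  have h := ((hasStrictFDerivAt_norm_sq x).rpow_const (p := s / 2)
    (Or.inl (by positivity))).hasFDerivAt
  have heq : (fun y : E => (‖y‖ ^ 2) ^ (s / 2)) = fun y : E => ‖y‖ ^ s := by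
    ext y
    rw [← Real.rpow_natCast ‖y‖ 2, ← Real.rpow_mul (norm_nonneg y),
      show (2:ℕ) * (s/2) = s by push_cast; ring]
  rw [heq] at h
  convert h using 1
  have h2 : ((‖x‖ ^ 2 : ℝ)) ^ (s / 2 - 1) = ‖x‖ ^ (s - 2) := by
    rw [← Real.rpow_natCast ‖x‖ 2, ← Real.rpow_mul (norm_nonneg x)]
    norm_num
    ring_nf
  rw [h2]
  ext y
  simp only [ContinuousLinearMap.smul_apply, ContinuousLinearMap.smul_apply, smul_eq_mul,
    two_smul, ContinuousLinearMap.add_apply]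
  ring

set_option maxHeartbeats 2000000 in
theorem minimizer_is_weak_solution (N : ℕ) (hN : 1 ≤ N)
    (p a b c S k lam C₁ : ℝ) (hp : 2 ≤ p)
    (hba : 0 < b + 1 - a) (hS : S = ((N:ℝ) - 1 - (p - 1) * a - b) / p) (hSpos : 0 < S)
    (hc : c = ((p - 1) * a + b + 1) / p) (hlam : 0 < lam) (hC₁ : 0 < C₁)
    (v : EuclideanSpace ℝ (Fin N) → ℝ)
    (hv : v = fun x => k * C₁ * lam ^ (S / (b + 1 - a)) *
        Real.exp (-(lam * ‖x‖ ^ (b + 1 - a) / (b + 1 - a)))) :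
    ∀ φ : EuclideanSpace ℝ (Fin N) → ℝ, ContDiff ℝ (⊤ : ℕ∞) φ → HasCompactSupport φ →
      (0 : EuclideanSpace ℝ (Fin N)) ∉ tsupport φ →
      (∫ x : EuclideanSpace ℝ (Fin N),
          ‖x‖ ^ (-(p * b)) * ‖gradient v x‖ ^ (p - 2) *
            (inner ℝ (gradient v x) (gradient φ x) : ℝ))
        + (p - 1) * lam ^ p *
            (∫ x : EuclideanSpace ℝ (Fin N), ‖x‖ ^ (-(p * a)) * |v x| ^ (p - 2) * v x * φ x)
        - p * S * lam ^ (p - 1) *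
            (∫ x : EuclideanSpace ℝ (Fin N), ‖x‖ ^ (-(p * c)) * |v x| ^ (p - 2) * v x * φ x)
        = 0 := by
  intro φ hφ hφc hφ0
  -- notation
  obtain ⟨β, hβdef⟩ : ∃ β : ℝ, β = b + 1 - a := ⟨_, rfl⟩
  have hβpos : 0 < β := hβdef ▸ hba
  have hβ0 : β ≠ 0 := ne_of_gt hβpos
  have hp0 : (0:ℝ) < p := by linarith
  obtain ⟨A, hAdef⟩ : ∃ A : ℝ, A = k * C₁ * lam ^ (S / β) := ⟨_, rfl⟩
  have hpc : p * c = (p - 1) * a + b + 1 := by rw [hc]; field_simp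
  have hpS : p * S = (N:ℝ) - 1 - (p - 1) * a - b := by rw [hS]; field_simp
  obtain ⟨Q, hQdef⟩ : ∃ Q : ℝ, Q = |A| ^ (p - 2) * A := ⟨_, rfl⟩
  obtain ⟨K, hKdef⟩ : ∃ K : ℝ, K = -(lam ^ (p - 1) * Q) := ⟨_, rfl⟩
  obtain ⟨m, hmdef⟩ : ∃ m : ℝ, m = (p - 1) * lam / β := ⟨_, rfl⟩
  obtain ⟨W, hWdef⟩ : ∃ W : EuclideanSpace ℝ (Fin N) → ℝ,
      W = fun x => K * ‖x‖ ^ (-(p * c)) * Real.exp (-(m * ‖x‖ ^ β)) := ⟨_, rfl⟩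
  obtain ⟨P, hPdef⟩ : ∃ P : EuclideanSpace ℝ (Fin N) → ℝ,
      P = fun x => K * Real.exp (-(m * ‖x‖ ^ β)) *
        ((-(p * c)) * ‖x‖ ^ (-(p * c) - 2) - m * β * ‖x‖ ^ (-(p * c) + β - 2)) := ⟨_, rfl⟩
  obtain ⟨U', hU'def⟩ : ∃ U' : EuclideanSpace ℝ (Fin N) →
        (EuclideanSpace ℝ (Fin N) →L[ℝ] ℝ),
      U' = fun x => (φ x * P x) • innerSL ℝ x + W x • fderiv ℝ φ x := ⟨_, rfl⟩
  obtain ⟨e, hedef⟩ : ∃ e : Fin N → EuclideanSpace ℝ (Fin N),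
      e = fun i => EuclideanSpace.single i (1:ℝ) := ⟨_, rfl⟩
  obtain ⟨D, hDdef⟩ : ∃ D : Fin N → EuclideanSpace ℝ (Fin N) → ℝ,
      D = fun i x => x i * (φ x * P x * x i + W x * fderiv ℝ φ x (e i)) + W x * φ x := ⟨_, rfl⟩
  have hvA : v = fun y : EuclideanSpace ℝ (Fin N) =>
      A * Real.exp (-(lam / β) * ‖y‖ ^ β) := by
    rw [hv]; funext y; rw [hAdef, hβdef]; congr 1; ring
  -- basic facts about φ
  have hφd : Differentiable ℝ φ := hφ.differentiable (by simp)
  have hφz : ∀ x ∉ tsupport φ, φ x = 0 := fun x hx => image_eq_zero_of_notMem_tsupport hx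
  have hφev : ∀ x ∉ tsupport φ, φ =ᶠ[nhds x] (fun _ => (0:ℝ)) := by
    intro x hx
    have hmem : (tsupport φ)ᶜ ∈ nhds x := (isClosed_tsupport φ).isOpen_compl.mem_nhds hx
    filter_upwards [hmem] with y hy using hφz y hy
  have hdφz : ∀ x ∉ tsupport φ, fderiv ℝ φ x = 0 := by
    intro x hx
    rw [(hφev x hx).fderiv_eq]
    exact fderiv_const_apply 0
  have hcov : ∀ x : EuclideanSpace ℝ (Fin N), x ∉ tsupport φ ∨ x ≠ 0 := by
    intro x
    by_cases h : x = 0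
    · exact Or.inl (h ▸ hφ0)
    · exact Or.inr h
  -- derivative of W away from 0
  have hWx : ∀ x : EuclideanSpace ℝ (Fin N), x ≠ 0 →
      HasFDerivAt W (P x • innerSL ℝ x) x := by
    intro x hx
    have hr : (0:ℝ) < ‖x‖ := norm_pos_iff.mpr hx
    have h1 := hasFDerivAt_norm_rpow_ne hx (-(p * c))
    have hβ' := hasFDerivAt_norm_rpow_ne hx β
    have hout : HasDerivAt (fun t : ℝ => Real.exp (-(m * t)))
        (Real.exp (-(m * ‖x‖ ^ β)) * (-m)) (‖x‖ ^ β) := by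
      have h0 : HasDerivAt (fun t : ℝ => -(m * t)) (-m) (‖x‖ ^ β) := by
        simpa using (hasDerivAt_id (‖x‖ ^ β)).const_mul (-m)
      exact h0.exp
    have h2 := hout.comp_hasFDerivAt x hβ'
    have h3 := (h1.const_mul K).mul h2
    have hrr : ‖x‖ ^ (-(p * c)) * ‖x‖ ^ (β - 2) = ‖x‖ ^ (-(p * c) + β - 2) := by
      rw [← Real.rpow_add hr]; ring_nf
    have h4 : HasFDerivAt W
        ((K * ‖x‖ ^ (-(p*c))) • ((Real.exp (-(m * ‖x‖ ^ β)) * (-m)) • ((β * ‖x‖ ^ (β - 2)) • innerSL ℝ x))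
          + Real.exp (-(m * ‖x‖ ^ β)) • (K • ((-(p * c) * ‖x‖ ^ (-(p * c) - 2)) • innerSL ℝ x))) x := by
      rw [hWdef]
      exact h3
    convert h4 using 1
    ext y
    simp only [ContinuousLinearMap.add_apply, ContinuousLinearMap.smul_apply, smul_eq_mul, hPdef]
    rw [← hrr]
    ring
  -- derivative of u = W * φ everywhere
  have hu : ∀ x : EuclideanSpace ℝ (Fin N), HasFDerivAt (fun y => W y * φ y) (U' x) x := by
    intro x
    rcases hcov x with hx | hx
    · have hloc : (fun y => W y * φ y) =ᶠ[nhds x] (fun _ => (0:ℝ)) := by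
        filter_upwards [hφev x hx] with y hy
        simp [hy]
      have hU0 : U' x = 0 := by
        rw [hU'def]
        simp [hφz x hx, hdφz x hx]
      rw [hU0]
      exact (hasFDerivAt_const (0:ℝ) x).congr_of_eventuallyEq hloc
    · have h := (hWx x hx).mul (hφd x).hasFDerivAt
      refine h.congr_fderiv ?_
      rw [hU'def, smul_smul]
      abel
  -- derivative of H i := u * xᵢ and its value at e i
  have hproje : ∀ i : Fin N, (EuclideanSpace.proj i : EuclideanSpace ℝ (Fin N) →L[ℝ] ℝ) (e i) = 1 := by
    intro i
    simp [hedef, EuclideanSpace.single_apply]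
  have hH : ∀ (i : Fin N) (x : EuclideanSpace ℝ (Fin N)),
      HasFDerivAt (fun y => (W y * φ y) * y i)
        ((W x * φ x) • (EuclideanSpace.proj i : EuclideanSpace ℝ (Fin N) →L[ℝ] ℝ)
          + (x i) • U' x) x := by
    intro i x
    exact (hu x).mul ((EuclideanSpace.proj i : EuclideanSpace ℝ (Fin N) →L[ℝ] ℝ).hasFDerivAt)
  have hU'e : ∀ (x : EuclideanSpace ℝ (Fin N)) (i : Fin N),
      U' x (e i) = φ x * P x * x i + W x * fderiv ℝ φ x (e i) := by
    intro x i
    rw [hU'def]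
    simp only [ContinuousLinearMap.add_apply, ContinuousLinearMap.smul_apply, smul_eq_mul]
    congr 1
    rw [hedef]
    simp [EuclideanSpace.inner_single_right]
  have hDe : ∀ (i : Fin N) (x : EuclideanSpace ℝ (Fin N)),
      fderiv ℝ (fun y => (W y * φ y) * y i) x (e i) = D i x := by
    intro i x
    rw [(hH i x).fderiv]
    simp only [ContinuousLinearMap.add_apply, ContinuousLinearMap.smul_apply, smul_eq_mul,
      hproje i, hU'e x i, hDdef]
    ring
  -- continuity facts
  have hexpC : Continuous (fun y : EuclideanSpace ℝ (Fin N) => Real.exp (-(m * ‖y‖ ^ β))) := by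
    have h1 : Continuous fun y : EuclideanSpace ℝ (Fin N) => ‖y‖ ^ β :=
      continuous_norm.rpow_const (fun y => Or.inr hβpos.le)
    exact Real.continuous_exp.comp ((continuous_const.mul h1).neg)
  have hfdC : Continuous (fderiv ℝ φ) := hφ.continuous_fderiv (by simp)
  have hcoord : ∀ i : Fin N, Continuous (fun x : EuclideanSpace ℝ (Fin N) => x i) := fun i =>
    (EuclideanSpace.proj i : EuclideanSpace ℝ (Fin N) →L[ℝ] ℝ).continuous
  have hrpowC : ∀ (s : ℝ) (x : EuclideanSpace ℝ (Fin N)), x ≠ 0 →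
      ContinuousAt (fun y : EuclideanSpace ℝ (Fin N) => ‖y‖ ^ s) x := by
    intro s x hx
    exact (continuous_norm.continuousAt).rpow_const (Or.inl (norm_ne_zero_iff.mpr hx))
  have hWC : ∀ x : EuclideanSpace ℝ (Fin N), x ≠ 0 → ContinuousAt W x := by
    intro x hx
    rw [hWdef]
    exact (continuousAt_const.mul (hrpowC _ x hx)).mul hexpC.continuousAt
  have hPC : ∀ x : EuclideanSpace ℝ (Fin N), x ≠ 0 → ContinuousAt P x := by
    intro x hx
    rw [hPdef]
    exact (continuousAt_const.mul hexpC.continuousAt).mul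
      ((continuousAt_const.mul (hrpowC _ x hx)).sub (continuousAt_const.mul (hrpowC _ x hx)))
  -- integrability helper
  have key_int : ∀ F : EuclideanSpace ℝ (Fin N) → ℝ,
      (∀ x ∉ tsupport φ, F x = 0) → (∀ x, x ≠ 0 → ContinuousAt F x) →
      Integrable F := by
    intro F hz hcnt
    have hFc : Continuous F := by
      rw [continuous_iff_continuousAt]
      intro x
      rcases hcov x with hx | hx
      · have hev : F =ᶠ[nhds x] (fun _ => (0:ℝ)) := by
          filter_upwards [(isClosed_tsupport φ).isOpen_compl.mem_nhds hx] with y hy using hz y hy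
        exact (continuousAt_congr hev).mpr continuousAt_const
      · exact hcnt x hx
    exact hFc.integrable_of_hasCompactSupport (HasCompactSupport.intro hφc hz)
  have hDint : ∀ i : Fin N, Integrable (D i) := by
    intro i
    apply key_int
    · intro x hx
      simp [hDdef, hφz x hx, hdφz x hx]
    · intro x hx
      rw [hDdef]
      exact ((hcoord i).continuousAt.mul
        (((hφ.continuous.continuousAt.mul (hPC x hx)).mul (hcoord i).continuousAt).add
          ((hWC x hx).mul (hfdC.clm_apply continuous_const).continuousAt))).add
        ((hWC x hx).mul hφ.continuous.continuousAt)
  have hHint : ∀ i : Fin N, Integrable (fun x : EuclideanSpace ℝ (Fin N) => (W x * φ x) * x i) := by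
    intro i
    apply key_int
    · intro x hx
      simp [hφz x hx]
    · intro x hx
      exact ((hWC x hx).mul hφ.continuous.continuousAt).mul (hcoord i).continuousAt
  -- integration by parts: each D i integrates to zero
  have hIBP : ∀ i : Fin N, (∫ x : EuclideanSpace ℝ (Fin N), D i x) = 0 := by
    intro i
    have hDeq : (fun x : EuclideanSpace ℝ (Fin N) =>
        fderiv ℝ (fun y => (W y * φ y) * y i) x (e i) * (1:ℝ)) = D i := by
      funext x
      rw [mul_one, hDe i x]
    have h := integral_mul_fderiv_eq_neg_fderiv_mul_of_integrable (μ := volume)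
      (f := fun x : EuclideanSpace ℝ (Fin N) => (W x * φ x) * x i)
      (g := fun _ : EuclideanSpace ℝ (Fin N) => (1:ℝ)) (v := e i)
      (by rw [hDeq]; exact hDint i)
      (by simp)
      (by simpa using hHint i)
      (fun x _ => (hH i x).differentiableAt)
      (fun x _ => differentiableAt_const _)
    simp only [fderiv_const, Pi.zero_apply, ContinuousLinearMap.zero_apply, mul_zero,
      integral_zero, zero_eq_neg, fderiv_const_apply] at h
    rw [hDeq] at h
    exact h
  -- summation identities
  have hsum_x : ∀ x : EuclideanSpace ℝ (Fin N), (∑ i, x i • e i) = x := by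
    intro x
    have h := (EuclideanSpace.basisFun (Fin N) ℝ).sum_repr x
    simpa [hedef, EuclideanSpace.basisFun_apply, EuclideanSpace.basisFun_repr] using h
  have hLsum : ∀ (L : EuclideanSpace ℝ (Fin N) →L[ℝ] ℝ) (x : EuclideanSpace ℝ (Fin N)),
      (∑ i, x i * L (e i)) = L x := by
    intro L x
    calc (∑ i, x i * L (e i)) = ∑ i, L (x i • e i) := by simp
      _ = L (∑ i, x i • e i) := (map_sum L _ _).symm
      _ = L x := by rw [hsum_x]
  have hxx : ∀ x : EuclideanSpace ℝ (Fin N), (∑ i, x i * x i) = ‖x‖ ^ 2 := by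
    intro x
    have h := real_inner_self_eq_norm_sq x
    rw [← h, PiLp.inner_apply]
    simp [RCLike.inner_apply, sq]
  have hDsum : ∀ x : EuclideanSpace ℝ (Fin N),
      (∑ i, D i x) = φ x * P x * ‖x‖ ^ 2 + W x * fderiv ℝ φ x x + N * (W x * φ x) := by
    intro x
    have h1 : ∀ i : Fin N, D i x = (φ x * P x) * (x i * x i)
        + W x * (x i * fderiv ℝ φ x (e i)) + W x * φ x := by
      intro i; rw [hDdef]; ring
    rw [Finset.sum_congr rfl (fun i _ => h1 i), Finset.sum_add_distrib, Finset.sum_add_distrib,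
      ← Finset.mul_sum, ← Finset.mul_sum, hxx x, hLsum (fderiv ℝ φ x) x,
      Finset.sum_const, Finset.card_univ, Fintype.card_fin, nsmul_eq_mul]
  -- pointwise form of |v|^(p-2) v
  have hz0 : ∀ x : EuclideanSpace ℝ (Fin N),
      Real.exp (-(lam / β) * ‖x‖ ^ β) ^ (p - 2)
        = Real.exp (-(lam / β) * ‖x‖ ^ β * (p - 2)) := by
    intro x
    rw [Real.rpow_def_of_pos (Real.exp_pos _), Real.log_exp]
  have hexpmul : ∀ x : EuclideanSpace ℝ (Fin N),
      Real.exp (-(lam / β) * ‖x‖ ^ β * (p - 2)) * Real.exp (-(lam / β) * ‖x‖ ^ β)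
        = Real.exp (-(m * ‖x‖ ^ β)) := by
    intro x
    rw [← Real.exp_add]
    congr 1
    rw [hmdef]
    ring
  have habs : ∀ x : EuclideanSpace ℝ (Fin N),
      |v x| ^ (p - 2) * v x = Q * Real.exp (-(m * ‖x‖ ^ β)) := by
    intro x
    have hvx : v x = A * Real.exp (-(lam / β) * ‖x‖ ^ β) := by rw [hvA]
    rw [hvx, abs_mul, Real.abs_exp, Real.mul_rpow (abs_nonneg A) (Real.exp_pos _).le, hz0 x,
      hQdef, ← hexpmul x]
    ring
  -- fderiv applied through the inner product with the gradient
  have hgradφ : ∀ (x y : EuclideanSpace ℝ (Fin N)),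
      (inner ℝ (gradient φ x) y : ℝ) = fderiv ℝ φ x y := by
    intro x y
    exact InnerProductSpace.toDual_symm_apply
  -- the gradient of v away from 0
  have hgrad : ∀ x : EuclideanSpace ℝ (Fin N), x ≠ 0 →
      HasGradientAt v ((-(lam * ‖x‖ ^ (β - 2) * v x)) • x) x := by
    intro x hx
    have hβ' := hasFDerivAt_norm_rpow_ne hx β
    have h0 : HasDerivAt (fun t : ℝ => -(lam / β) * t) (-(lam / β)) (‖x‖ ^ β) := by
      simpa using (hasDerivAt_id (‖x‖ ^ β)).const_mul (-(lam / β))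
    have hout := (h0.exp).const_mul A
    have hcomp := hout.comp_hasFDerivAt x hβ'
    rw [hasGradientAt_iff_hasFDerivAt]
    have hvx : v x = A * Real.exp (-(lam / β) * ‖x‖ ^ β) := by rw [hvA]
    rw [hvA]
    refine hcomp.congr_fderiv ?_
    ext y
    simp only [InnerProductSpace.toDual_apply_apply, ContinuousLinearMap.smul_apply, smul_eq_mul,
      real_inner_smul_left, hvx, innerSL_apply_apply]
    field_simp
  -- the first integrand away from 0
  have hT1x : ∀ x : EuclideanSpace ℝ (Fin N), x ≠ 0 →
      ‖x‖ ^ (-(p * b)) * ‖gradient v x‖ ^ (p - 2) *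
        (inner ℝ (gradient v x) (gradient φ x) : ℝ) = W x * fderiv ℝ φ x x := by
    intro x hx
    have hr : (0:ℝ) < ‖x‖ := norm_pos_iff.mpr hx
    have hg := (hgrad x hx).gradient
    rw [hg]
    have hvx : v x = A * Real.exp (-(lam / β) * ‖x‖ ^ β) := by rw [hvA]
    have hinner : (inner ℝ ((-(lam * ‖x‖ ^ (β - 2) * v x)) • x) (gradient φ x) : ℝ)
        = (-(lam * ‖x‖ ^ (β - 2) * v x)) * fderiv ℝ φ x x := by
      rw [real_inner_smul_left, real_inner_comm, hgradφ x x]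
    have habsc : ‖(-(lam * ‖x‖ ^ (β - 2) * v x)) • x‖
        = lam * ‖x‖ ^ (β - 2) * (|A| * Real.exp (-(lam / β) * ‖x‖ ^ β)) * ‖x‖ := by
      rw [norm_smul, Real.norm_eq_abs, hvx, abs_neg, abs_mul, abs_mul, abs_of_pos hlam,
        abs_of_nonneg (Real.rpow_nonneg (norm_nonneg x) _), abs_mul, Real.abs_exp]
    rw [hinner, habsc]
    have hsplit : (lam * ‖x‖ ^ (β - 2) * (|A| * Real.exp (-(lam / β) * ‖x‖ ^ β)) * ‖x‖) ^ (p - 2)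
        = lam ^ (p - 2) * ‖x‖ ^ ((β - 2) * (p - 2)) * (|A| ^ (p - 2) *
            Real.exp (-(lam / β) * ‖x‖ ^ β * (p - 2))) * ‖x‖ ^ (p - 2) := by
      rw [Real.mul_rpow (by positivity) (norm_nonneg x),
        Real.mul_rpow (by positivity) (by positivity),
        Real.mul_rpow hlam.le (Real.rpow_nonneg (norm_nonneg x) _),
        Real.mul_rpow (abs_nonneg A) (Real.exp_pos _).le,
        ← Real.rpow_mul (norm_nonneg x), hz0 x]
    rw [hsplit]
    have f1 : ‖x‖ ^ (-(p * b)) * ‖x‖ ^ ((β - 2) * (p - 2)) * ‖x‖ ^ (p - 2) * ‖x‖ ^ (β - 2)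
        = ‖x‖ ^ (-(p * c)) := by
      rw [← Real.rpow_add hr, ← Real.rpow_add hr, ← Real.rpow_add hr]
      congr 1
      rw [hβdef]
      linear_combination hpc
    have f3 : lam ^ (p - 1) = lam ^ (p - 2) * lam := by
      rw [← Real.rpow_add_one hlam.ne' (p - 2)]
      congr 1
      ring
    rw [hWdef]
    simp only []
    rw [hKdef, hQdef, ← f1, ← hexpmul x, f3, hvx]
    ring_nf
  -- almost-everywhere nonvanishing of the base point
  haveI : Nonempty (Fin N) := ⟨⟨0, hN⟩⟩
  have hae : ∀ᵐ x : EuclideanSpace ℝ (Fin N), x ≠ 0 := by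
    rw [MeasureTheory.ae_iff]
    have hset : {x : EuclideanSpace ℝ (Fin N) | ¬ x ≠ 0}
        = {(0 : EuclideanSpace ℝ (Fin N))} := by
      ext y; simp
    rw [hset]
    exact measure_singleton 0
  have hI1 : (∫ x : EuclideanSpace ℝ (Fin N),
      ‖x‖ ^ (-(p * b)) * ‖gradient v x‖ ^ (p - 2) *
        (inner ℝ (gradient v x) (gradient φ x) : ℝ))
      = ∫ x : EuclideanSpace ℝ (Fin N), W x * fderiv ℝ φ x x := by
    apply integral_congr_ae
    filter_upwards [hae] with x hx using hT1x x hx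
  have hI2 : (fun x : EuclideanSpace ℝ (Fin N) => ‖x‖ ^ (-(p * a)) * |v x| ^ (p - 2) * v x * φ x)
      = fun x : EuclideanSpace ℝ (Fin N) =>
          ‖x‖ ^ (-(p * a)) * (Q * Real.exp (-(m * ‖x‖ ^ β))) * φ x := by
    funext x
    rw [show ‖x‖ ^ (-(p * a)) * |v x| ^ (p - 2) * v x
        = ‖x‖ ^ (-(p * a)) * (|v x| ^ (p - 2) * v x) by ring, habs x]
  have hI3 : (fun x : EuclideanSpace ℝ (Fin N) => ‖x‖ ^ (-(p * c)) * |v x| ^ (p - 2) * v x * φ x)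
      = fun x : EuclideanSpace ℝ (Fin N) =>
          ‖x‖ ^ (-(p * c)) * (Q * Real.exp (-(m * ‖x‖ ^ β))) * φ x := by
    funext x
    rw [show ‖x‖ ^ (-(p * c)) * |v x| ^ (p - 2) * v x
        = ‖x‖ ^ (-(p * c)) * (|v x| ^ (p - 2) * v x) by ring, habs x]
  have hJ1 : Integrable (fun x : EuclideanSpace ℝ (Fin N) => W x * fderiv ℝ φ x x) := by
    apply key_int
    · intro x hx; simp [hdφz x hx]
    · intro x hx
      exact (hWC x hx).mul ((hfdC.clm_apply continuous_id).continuousAt)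
  have hJ2 : Integrable (fun x : EuclideanSpace ℝ (Fin N) =>
      (p - 1) * lam ^ p * (‖x‖ ^ (-(p * a)) * (Q * Real.exp (-(m * ‖x‖ ^ β))) * φ x)) := by
    apply key_int
    · intro x hx; simp [hφz x hx]
    · intro x hx
      exact continuousAt_const.mul (((hrpowC _ x hx).mul
        (continuousAt_const.mul hexpC.continuousAt)).mul hφ.continuous.continuousAt)
  have hJ3 : Integrable (fun x : EuclideanSpace ℝ (Fin N) =>
      p * S * lam ^ (p - 1) * (‖x‖ ^ (-(p * c)) * (Q * Real.exp (-(m * ‖x‖ ^ β))) * φ x)) := by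
    apply key_int
    · intro x hx; simp [hφz x hx]
    · intro x hx
      exact continuousAt_const.mul (((hrpowC _ x hx).mul
        (continuousAt_const.mul hexpC.continuousAt)).mul hφ.continuous.continuousAt)
  rw [hI1, hI2, hI3]
  have hval : (∫ x : EuclideanSpace ℝ (Fin N), W x * fderiv ℝ φ x x)
      + (p - 1) * lam ^ p *
        (∫ x : EuclideanSpace ℝ (Fin N), ‖x‖ ^ (-(p * a)) * (Q * Real.exp (-(m * ‖x‖ ^ β))) * φ x)
      - p * S * lam ^ (p - 1) *
        (∫ x : EuclideanSpace ℝ (Fin N), ‖x‖ ^ (-(p * c)) * (Q * Real.exp (-(m * ‖x‖ ^ β))) * φ x)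
      = ∫ x : EuclideanSpace ℝ (Fin N),
          (W x * fderiv ℝ φ x x
            + (p - 1) * lam ^ p * (‖x‖ ^ (-(p * a)) * (Q * Real.exp (-(m * ‖x‖ ^ β))) * φ x)
            - p * S * lam ^ (p - 1) * (‖x‖ ^ (-(p * c)) * (Q * Real.exp (-(m * ‖x‖ ^ β))) * φ x)) := by
    have hJ12 : Integrable (fun x : EuclideanSpace ℝ (Fin N) =>
        W x * fderiv ℝ φ x x
          + (p - 1) * lam ^ p * (‖x‖ ^ (-(p * a)) * (Q * Real.exp (-(m * ‖x‖ ^ β))) * φ x))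
        (volume) := hJ1.add hJ2
    rw [integral_sub hJ12 hJ3, integral_add hJ1 hJ2, integral_const_mul, integral_const_mul]
  rw [hval]
  have hptw : (fun x : EuclideanSpace ℝ (Fin N) =>
      W x * fderiv ℝ φ x x
        + (p - 1) * lam ^ p * (‖x‖ ^ (-(p * a)) * (Q * Real.exp (-(m * ‖x‖ ^ β))) * φ x)
        - p * S * lam ^ (p - 1) * (‖x‖ ^ (-(p * c)) * (Q * Real.exp (-(m * ‖x‖ ^ β))) * φ x))
      = fun x : EuclideanSpace ℝ (Fin N) => ∑ i, D i x := by
    funext x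
    rw [hDsum x]
    rcases hcov x with hx | hx
    · simp [hφz x hx, hdφz x hx]
    · have hr : (0:ℝ) < ‖x‖ := norm_pos_iff.mpr hx
      have g1 : ‖x‖ ^ (-(p * c) + β - 2) * ‖x‖ ^ (2:ℕ) = ‖x‖ ^ (-(p * a)) := by
        rw [← Real.rpow_natCast ‖x‖ 2, ← Real.rpow_add hr]
        congr 1
        push_cast
        rw [hβdef]
        linear_combination -hpc
      have g2 : ‖x‖ ^ (-(p * c) - 2) * ‖x‖ ^ (2:ℕ) = ‖x‖ ^ (-(p * c)) := by
        rw [← Real.rpow_natCast ‖x‖ 2, ← Real.rpow_add hr]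
        norm_num
      have g3 : lam ^ p = lam ^ (p - 1) * lam := by
        rw [← Real.rpow_add_one hlam.ne' (p - 1)]
        congr 1
        ring
      have g4 : p * S = (N:ℝ) - p * c := by linear_combination hpS + hpc
      have g5 : m * β = (p - 1) * lam := by rw [hmdef]; field_simp
      simp only [hWdef, hPdef, hKdef]
      rw [g3, g4, ← g1, ← g2, g5]
      ring
  rw [hptw, integral_finset_sum _ (fun i _ => hDint i)]
  simp [hIBP]
end
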